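/- arXiv:1411.3840 — 2 statements merged into one kernel-verified Lean document; each statement's English description precedes it below -/
import Mathlib

section
/- Let λ_n(ξ) denote the increasingly ordered eigenvalues of A(ξ) = A₀ + A₁(ξ) + ½|ξ|²I. Then for every ξ ∈ ℝ^d and every n, λ_n(ξ) ≤ E_n + 2|ξ| E_n^{1/2} + ½|ξ|². -/
/-!
For a unit vector `g` in the domain of `A₀`,
`⟨A(ξ)g, g⟩ = ⟨A₀g, g⟩ + Re ⟨g, A₁(ξ)g⟩ + |ξ|²/2`, and by Cauchy–Schwarz and the relative bound
on `A₁(ξ)` the middle term is at most `2|ξ| ⟨A₀g, g⟩^{1/2}` in absolute value. If `dim S = n`,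
the `(n+1)`-dimensional span of `e₀, …, eₙ` contains a unit vector `g ⊥ S`, and for it
`⟨A₀g, g⟩ ≤ Eₙ` by monotonicity of `E`; this bounds the inner minimum, hence `λₙ(ξ)`.
-/

open scoped lp ComplexConjugate
open Module

theorem Real.iInf_le_of_le {ι : Sort*} {f : ι → ℝ} {a : ℝ} (i : ι) (hi : f i ≤ a) (ha : 0 ≤ a) :
    ⨅ i, f i ≤ a := by
  by_cases hf : BddBelow (Set.range f)
  · exact ciInf_le_of_le hf i hi
  · rwa [Real.iInf_of_not_bddBelow hf]

section InnerProductSpace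

variable {𝕜 E : Type*} [RCLike 𝕜] [NormedAddCommGroup E] [InnerProductSpace 𝕜 E]

theorem Submodule.exists_mem_orthogonal_norm_eq_one_of_finrank_lt (S V : Submodule 𝕜 E)
    [FiniteDimensional 𝕜 S] (h : finrank 𝕜 S < finrank 𝕜 V) :
    ∃ v ∈ V, v ∈ Sᗮ ∧ ‖v‖ = 1 := by
  have hT : ¬ Function.Injective (S.orthogonalProjectionOnto.toLinearMap ∘ₗ V.subtype) :=
    fun hinj => (LinearMap.finrank_le_finrank_of_injective hinj).not_gt h
  obtain ⟨v, hv, hv0⟩ : ∃ v ∈ LinearMap.ker (S.orthogonalProjectionOnto.toLinearMap ∘ₗ V.subtype),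
      v ≠ 0 :=
    Submodule.exists_mem_ne_zero_of_ne_bot (by rwa [Ne, LinearMap.ker_eq_bot])
  have hperp : (v : E) ∈ Sᗮ := S.orthogonalProjectionOnto_eq_zero_iff.mp hv
  have hv0' : (v : E) ≠ 0 := by simpa using hv0
  exact ⟨(‖(v : E)‖⁻¹ : 𝕜) • (v : E), V.smul_mem _ v.2, Sᗮ.smul_mem _ hperp,
    norm_smul_inv_norm hv0'⟩

theorem Submodule.finrank_orthogonal_eq_zero (K : Submodule 𝕜 E) [FiniteDimensional 𝕜 K]
    (hE : ¬ FiniteDimensional 𝕜 E) : finrank 𝕜 Kᗮ = 0 := by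
  refine finrank_of_not_finite fun hK => hE ?_
  have : FiniteDimensional 𝕜 (⊤ : Submodule 𝕜 E) := by
    rw [← K.sup_orthogonal_of_hasOrthogonalProjection]; infer_instance
  exact Module.Finite.equiv (LinearEquiv.ofTop ⊤ rfl)

end InnerProductSpace

namespace lp

variable {ι 𝕜 : Type*} [RCLike 𝕜]

theorem norm_sq_eq_tsum (g : ℓ²(ι, 𝕜)) : ‖g‖ ^ 2 = ∑' i, ‖g i‖ ^ 2 := by
  have h := norm_rpow_eq_tsum (p := 2) (by norm_num) g
  norm_num at h
  exact_mod_cast h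

theorem summable_norm_sq (g : ℓ²(ι, 𝕜)) : Summable fun i => ‖g i‖ ^ 2 := by
  have h := (lp.memℓp g).summable (p := 2) (by norm_num)
  norm_num at h
  exact_mod_cast h

theorem memℓp_two_of_summable {a : ι → 𝕜} (ha : Summable fun i => ‖a i‖ ^ 2) : Memℓp a 2 :=
  memℓp_gen (by norm_num; exact_mod_cast ha)

theorem summable_mul_norm_sq_of_support {g : ℓ²(ι, 𝕜)} {s : Finset ι} (hs : ∀ i ∉ s, g i = 0)
    (f : ι → ℝ) : Summable fun i => f i * ‖g i‖ ^ 2 :=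
  summable_of_ne_finset_zero (s := s) fun i hi => by simp [hs i hi]

theorem summable_conj_mul (g : ℓ²(ι, 𝕜)) {a : ι → 𝕜} (ha : Summable fun i => ‖a i‖ ^ 2) :
    Summable fun i => conj (g i) * a i :=
  (lp.summable_inner g (⟨a, memℓp_two_of_summable ha⟩ : ℓ²(ι, 𝕜))).congr fun _ =>
    RCLike.inner_apply' _ _

theorem norm_tsum_conj_mul_le (g : ℓ²(ι, 𝕜)) {a : ι → 𝕜} (ha : Summable fun i => ‖a i‖ ^ 2) :
    ‖∑' i, conj (g i) * a i‖ ≤ ‖g‖ * √(∑' i, ‖a i‖ ^ 2) := by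
  set A : ℓ²(ι, 𝕜) := ⟨a, memℓp_two_of_summable ha⟩
  have hinner : inner 𝕜 g A = ∑' i, conj (g i) * a i :=
    (lp.inner_eq_tsum g A).trans (tsum_congr fun _ => RCLike.inner_apply' _ _)
  have hA : ‖A‖ = √(∑' i, ‖a i‖ ^ 2) := by
    rw [← norm_sq_eq_tsum A, Real.sqrt_sq (norm_nonneg A)]
  rw [← hinner, ← hA]
  exact norm_inner_le_norm g A

variable [DecidableEq ι]

theorem orthonormal_single : Orthonormal 𝕜 fun i : ι => (lp.single 2 i (1 : 𝕜) : ℓ²(ι, 𝕜)) := by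
  rw [orthonormal_iff_ite]
  intro i j
  simp [lp.inner_single_left, lp.single_apply, Pi.single_apply]

variable (ι 𝕜) in
theorem not_finiteDimensional [Infinite ι] : ¬ FiniteDimensional 𝕜 ℓ²(ι, 𝕜) := fun _ =>
  Module.Finite.not_linearIndependent_of_infinite _
    (orthonormal_single (𝕜 := 𝕜) (ι := ι)).linearIndependent

theorem apply_eq_zero_of_mem_span_single {s : Set ι} {g : ℓ²(ι, 𝕜)}
    (hg : g ∈ Submodule.span 𝕜 (Set.range fun j : s => (lp.single 2 (j : ι) 1 : ℓ²(ι, 𝕜))))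
    {i : ι} (hi : i ∉ s) : g i = 0 := by
  have hle : Submodule.span 𝕜 (Set.range fun j : s => (lp.single 2 (j : ι) 1 : ℓ²(ι, 𝕜))) ≤
      LinearMap.ker (lp.evalₗ (𝕜 := 𝕜) (fun _ : ι => 𝕜) 2 i) := by
    rw [Submodule.span_le]
    rintro _ ⟨j, rfl⟩
    simp [lp.single_apply, ne_of_mem_of_not_mem j.2 hi]
  exact hle hg

theorem exists_mem_orthogonal_norm_eq_one_of_finrank_lt (S : Submodule 𝕜 ℓ²(ι, 𝕜))
    [FiniteDimensional 𝕜 S] (s : Finset ι) (h : finrank 𝕜 S < s.card) :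
    ∃ g ∈ Sᗮ, ‖g‖ = 1 ∧ ∀ i ∉ s, g i = 0 := by
  have hli : LinearIndependent 𝕜 fun j : s => (lp.single 2 (j : ι) (1 : 𝕜) : ℓ²(ι, 𝕜)) :=
    (orthonormal_single.comp _ Subtype.val_injective).linearIndependent
  obtain ⟨g, hgV, hgS, hg⟩ := S.exists_mem_orthogonal_norm_eq_one_of_finrank_lt
    (Submodule.span 𝕜 _) (by rwa [finrank_span_eq_card hli, Fintype.card_coe])
  exact ⟨g, hgS, hg, fun i hi => apply_eq_zero_of_mem_span_single hgV hi⟩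

end lp

section QuadraticForm

variable {ι : Type*}

/-- `Re ⟨(diag E + A₁ + c) g, g⟩`, where `a1 g` is the coordinate sequence of `A₁ g`. -/
noncomputable def quadForm (E : ι → ℝ) (a1 : ℓ²(ι, ℂ) → ι → ℂ) (c : ℝ) (g : ℓ²(ι, ℂ)) : ℝ :=
  (∑' i, conj (g i) * ((E i : ℂ) * g i + a1 g i + (c : ℂ) * g i)).re

theorem quadForm_eq {E : ι → ℝ} {a1 : ℓ²(ι, ℂ) → ι → ℂ} (c : ℝ) {g : ℓ²(ι, ℂ)}
    (hE : Summable fun i => E i * ‖g i‖ ^ 2) (ha : Summable fun i => ‖a1 g i‖ ^ 2) :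
    quadForm E a1 c g = ∑' i, E i * ‖g i‖ ^ 2 + (∑' i, conj (g i) * a1 g i).re + c * ‖g‖ ^ 2 := by
  have hterm : ∀ i, conj (g i) * ((E i : ℂ) * g i + a1 g i + (c : ℂ) * g i) =
      ((E i * ‖g i‖ ^ 2 + c * ‖g i‖ ^ 2 : ℝ) : ℂ) + conj (g i) * a1 g i := by
    intro i
    push_cast
    linear_combination (↑(E i) + ↑c) * Complex.conj_mul' (g i)
  have hdiag : Summable fun i => E i * ‖g i‖ ^ 2 + c * ‖g i‖ ^ 2 :=
    hE.add ((lp.summable_norm_sq g).mul_left c)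
  rw [quadForm, tsum_congr hterm, (Complex.summable_ofReal.mpr hdiag).tsum_add
    (lp.summable_conj_mul g ha), Complex.add_re, ← Complex.ofReal_tsum, Complex.ofReal_re,
    hE.tsum_add ((lp.summable_norm_sq g).mul_left c), tsum_mul_left, ← lp.norm_sq_eq_tsum]
  ring

variable {E : ι → ℝ} {a1 : ℓ²(ι, ℂ) → ι → ℂ} {r : ℝ}

theorem abs_quadForm_sub_le (hr : 0 ≤ r) (hE : ∀ i, 0 ≤ E i)
    (ha1 : ∀ g : ℓ²(ι, ℂ), Summable (fun i => E i ^ 2 * ‖g i‖ ^ 2) →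
      Summable (fun i => ‖a1 g i‖ ^ 2) ∧
        ∑' i, ‖a1 g i‖ ^ 2 ≤ 2 * r ^ 2 * ∑' i, E i * ‖g i‖ ^ 2)
    {g : ℓ²(ι, ℂ)} (hg : ‖g‖ = 1) {s : Finset ι} (hs : ∀ i ∉ s, g i = 0) :
    |quadForm E a1 (r ^ 2 / 2) g - (∑' i, E i * ‖g i‖ ^ 2 + r ^ 2 / 2)| ≤
      2 * r * √(∑' i, E i * ‖g i‖ ^ 2) := by
  have hfin := lp.summable_mul_norm_sq_of_support hs
  obtain ⟨ha, ha_le⟩ := ha1 g (hfin _)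
  set t := ∑' i, E i * ‖g i‖ ^ 2
  have ht : 0 ≤ t := tsum_nonneg fun i => mul_nonneg (hE i) (sq_nonneg _)
  have hcross : ‖∑' i, conj (g i) * a1 g i‖ ≤ 2 * r * √t := by
    refine (lp.norm_tsum_conj_mul_le g ha).trans ?_
    rw [hg, one_mul, Real.sqrt_le_iff]
    refine ⟨by positivity, ha_le.trans ?_⟩
    rw [mul_pow, Real.sq_sqrt ht]
    nlinarith [mul_nonneg (sq_nonneg r) ht]
  rw [quadForm_eq _ (hfin E) ha, hg]
  calc _ = |(∑' i, conj (g i) * a1 g i).re| := by congr 1; ring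
    _ ≤ _ := (Complex.abs_re_le_norm _).trans hcross

end QuadraticForm

/-- The inner minimum of the max-min principle; `Summable (E i ^ 2 * ‖g i‖ ^ 2)` is `g ∈ D(A₀)`. -/
noncomputable def infOnOrthogonal {ι : Type*} (E : ι → ℝ) (Q : ℓ²(ι, ℂ) → ℝ)
    (S : Submodule ℂ ℓ²(ι, ℂ)) : ℝ :=
  ⨅ g : {g : ℓ²(ι, ℂ) // g ∈ Sᗮ ∧ Summable (fun i => E i ^ 2 * ‖g i‖ ^ 2) ∧ ‖g‖ = 1}, Q g

section MaxMin

variable {E : ℕ → ℝ} {a1 : ℓ²(ℕ, ℂ) → ℕ → ℂ} {r : ℝ} (hr : 0 ≤ r) (hE : ∀ n, 0 ≤ E n)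
  (ha1 : ∀ g : ℓ²(ℕ, ℂ), Summable (fun n => E n ^ 2 * ‖g n‖ ^ 2) →
    Summable (fun n => ‖a1 g n‖ ^ 2) ∧
      ∑' n, ‖a1 g n‖ ^ 2 ≤ 2 * r ^ 2 * ∑' n, E n * ‖g n‖ ^ 2)
include hr hE ha1

theorem quadForm_le_of_support_subset_range (hEmono : Monotone E) {n : ℕ} {g : ℓ²(ℕ, ℂ)}
    (hg : ‖g‖ = 1) (hs : ∀ m ∉ Finset.range (n + 1), g m = 0) :
    quadForm E a1 (r ^ 2 / 2) g ≤ E n + 2 * r * √(E n) + r ^ 2 / 2 := by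
  have ht : ∑' m, E m * ‖g m‖ ^ 2 ≤ E n := by
    calc ∑' m, E m * ‖g m‖ ^ 2 ≤ ∑' m, E n * ‖g m‖ ^ 2 := by
          refine (lp.summable_mul_norm_sq_of_support hs E).tsum_le_tsum (fun m => ?_)
            ((lp.summable_norm_sq g).mul_left _)
          by_cases hm : m ∈ Finset.range (n + 1)
          · exact mul_le_mul_of_nonneg_right (hEmono (Finset.mem_range_succ_iff.mp hm))
              (sq_nonneg _)
          · simp [hs m hm]
      _ = E n := by rw [tsum_mul_left, ← lp.norm_sq_eq_tsum, hg, one_pow, mul_one]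
  have hsqrt := Real.sqrt_le_sqrt ht
  have := (abs_le.mp (abs_quadForm_sub_le hr hE ha1 hg hs)).2
  nlinarith

theorem quadForm_ge_of_support_singleton {N : ℕ} {g : ℓ²(ℕ, ℂ)} (hg : ‖g‖ = 1)
    (hs : ∀ m ≠ N, g m = 0) :
    E N - 2 * r * √(E N) + r ^ 2 / 2 ≤ quadForm E a1 (r ^ 2 / 2) g := by
  have hgN : ‖g N‖ ^ 2 = 1 := by
    calc ‖g N‖ ^ 2 = ∑' m, ‖g m‖ ^ 2 := by rw [tsum_eq_single N fun m hm => by simp [hs m hm]]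
      _ = 1 := by rw [← lp.norm_sq_eq_tsum, hg, one_pow]
  have ht : ∑' m, E m * ‖g m‖ ^ 2 = E N := by
    rw [tsum_eq_single N fun m hm => by simp [hs m hm], hgN, mul_one]
  have := (abs_le.mp (abs_quadForm_sub_le hr hE ha1 hg (s := {N})
    fun m hm => hs m (by simpa using hm))).1
  rw [ht] at this
  linarith

theorem infOnOrthogonal_le (hEmono : Monotone E) {n : ℕ} (hn : 0 < n)
    (S : Submodule ℂ ℓ²(ℕ, ℂ)) (hS : finrank ℂ S = n) :
    infOnOrthogonal E (quadForm E a1 (r ^ 2 / 2)) S ≤ E n + 2 * r * √(E n) + r ^ 2 / 2 := by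
  have : FiniteDimensional ℂ S := Module.finite_of_finrank_pos (hS ▸ hn)
  obtain ⟨g, hgS, hg, hs⟩ :=
    lp.exists_mem_orthogonal_norm_eq_one_of_finrank_lt S (Finset.range (n + 1)) (by simp [hS])
  exact Real.iInf_le_of_le ⟨g, hgS, lp.summable_mul_norm_sq_of_support hs _, hg⟩
    (quadForm_le_of_support_subset_range hr hE ha1 hEmono hg hs) (by have := hE n; positivity)

/-- `finrank` is `0` on infinite-dimensional subspaces, so for `n = 0` the supremum also runs over
`S = (ℂ ∙ e_N)ᗮ`, whose inner minimum is at least `E_N - 2r √E_N`. As `E_N → ∞` these values are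
unbounded, and the real supremum takes its junk value `0`. -/
theorem not_bddAbove_infOnOrthogonal_finrank_eq_zero (hEtop : Filter.Tendsto E .atTop .atTop) :
    ¬ BddAbove (Set.range fun S : {S : Submodule ℂ ℓ²(ℕ, ℂ) // finrank ℂ S = 0} =>
      infOnOrthogonal E (quadForm E a1 (r ^ 2 / 2)) S) := by
  rintro ⟨M, hM⟩
  obtain ⟨N, hN⟩ := (hEtop.eventually_gt_atTop (2 * (M + 2 * r ^ 2))).exists
  set e : ℓ²(ℕ, ℂ) := lp.single 2 N 1
  have hS : finrank ℂ (ℂ ∙ e)ᗮ = 0 :=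
    (ℂ ∙ e).finrank_orthogonal_eq_zero (lp.not_finiteDimensional ℕ ℂ)
  have hSperp : (ℂ ∙ e)ᗮᗮ = ℂ ∙ e := Submodule.orthogonal_orthogonal _
  have hvanish : ∀ g ∈ (ℂ ∙ e)ᗮᗮ, ∀ m ≠ N, g m = 0 := by
    intro g hg m hm
    obtain ⟨c, rfl⟩ := Submodule.mem_span_singleton.mp (hSperp ▸ hg)
    simp [e, lp.single_apply, hm]
  have he : ‖e‖ = 1 := by simp [e, lp.norm_single]
  have he_mem : e ∈ (ℂ ∙ e)ᗮᗮ := by rw [hSperp]; exact Submodule.mem_span_singleton_self e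
  have : Nonempty {g : ℓ²(ℕ, ℂ) // g ∈ (ℂ ∙ e)ᗮᗮ ∧
      Summable (fun i => E i ^ 2 * ‖g i‖ ^ 2) ∧ ‖g‖ = 1} :=
    ⟨⟨e, he_mem, lp.summable_mul_norm_sq_of_support (s := {N})
      (fun m hm => hvanish e he_mem m (by simpa using hm)) _, he⟩⟩
  have hlower : E N - 2 * r * √(E N) + r ^ 2 / 2 ≤
      infOnOrthogonal E (quadForm E a1 (r ^ 2 / 2)) (ℂ ∙ e)ᗮ :=
    le_ciInf fun g => quadForm_ge_of_support_singleton hr hE ha1 g.2.2.2 (hvanish g.1 g.2.1)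
  have hupper := hM ⟨⟨_, hS⟩, rfl⟩
  -- `2 r √E_N ≤ E_N / 2 + 2 r²`
  nlinarith [sq_nonneg (√(E N) - 2 * r), Real.sq_sqrt (hE N)]

end MaxMin

/-- Let λ_n(ξ) be the increasingly ordered eigenvalues of
A(ξ) = A₀ + A₁(ξ) + ½|ξ|²I on ℓ²(ℕ,ℂ), characterized by the max-min principle
λ_n(ξ) = max_{dim S = n} min{ ⟨A(ξ)g,g⟩ : g ∈ S^⊥ ∩ D(A₀), ‖g‖ = 1 }.
Here A₀ is diagonal with increasing eigenvalues E_n ≥ 1 → ∞ and A₁(ξ)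
satisfies ‖A₁(ξ)g‖² ≤ 2|ξ|²⟨A₀g,g⟩ on D(A₀).  Then for every n,
λ_n(ξ) ≤ E_n + 2|ξ| E_n^{1/2} + ½|ξ|². -/
theorem eigenvalue_upper_bound_maxmin
    (d : ℕ) (E : ℕ → ℝ) (hE1 : ∀ n, 1 ≤ E n) (hEmono : Monotone E)
    (hEtop : Filter.Tendsto E Filter.atTop Filter.atTop)
    (ξ : EuclideanSpace ℝ (Fin d))
    (a1 : lp (fun _ : ℕ => ℂ) 2 → ℕ → ℂ)
    (ha1 : ∀ g : lp (fun _ : ℕ => ℂ) 2,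
      Summable (fun n => (E n) ^ 2 * ‖g n‖ ^ 2) →
      Summable (fun n => ‖a1 g n‖ ^ 2) ∧
        ∑' n : ℕ, ‖a1 g n‖ ^ 2 ≤ 2 * ‖ξ‖ ^ 2 * ∑' n : ℕ, E n * ‖g n‖ ^ 2)
    (Q : lp (fun _ : ℕ => ℂ) 2 → ℝ)
    (hQ : ∀ g, Q g = (∑' n : ℕ, (starRingEnd ℂ) (g n) *
        ((E n : ℂ) * g n + a1 g n + ((‖ξ‖ ^ 2 / 2 : ℝ) : ℂ) * g n)).re)
    (lam : ℕ → ℝ)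
    (hmaxmin : ∀ n : ℕ, lam n =
      ⨆ S : {S : Submodule ℂ (lp (fun _ : ℕ => ℂ) 2) // Module.finrank ℂ S = n},
        ⨅ g : {g : lp (fun _ : ℕ => ℂ) 2 // g ∈ (S.1)ᗮ ∧
            Summable (fun m => (E m) ^ 2 * ‖g m‖ ^ 2) ∧ ‖g‖ = 1},
          Q g.1) :
    ∀ n : ℕ, lam n ≤ E n + 2 * ‖ξ‖ * Real.sqrt (E n) + ‖ξ‖ ^ 2 / 2 := by
  obtain rfl : Q = quadForm E a1 (‖ξ‖ ^ 2 / 2) := funext hQ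
  have hE : ∀ n, 0 ≤ E n := fun n => zero_le_one.trans (hE1 n)
  have hbound : ∀ n, 0 ≤ E n + 2 * ‖ξ‖ * √(E n) + ‖ξ‖ ^ 2 / 2 := fun n => by
    have := hE n; positivity
  intro n
  have hlam : lam n = ⨆ S : {S : Submodule ℂ ℓ²(ℕ, ℂ) // finrank ℂ S = n},
      infOnOrthogonal E (quadForm E a1 (‖ξ‖ ^ 2 / 2)) S := hmaxmin n
  rw [hlam]
  rcases n.eq_zero_or_pos with rfl | hn
  · rw [Real.iSup_of_not_bddAbove
      (not_bddAbove_infOnOrthogonal_finrank_eq_zero (norm_nonneg ξ) hE ha1 hEtop)]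
    exact hbound 0
  · exact Real.iSup_le (fun S => infOnOrthogonal_le (norm_nonneg ξ) hE ha1 hEmono hn S S.2)
      (hbound n)
end

section
/- Let p > s ≥ 0 be integers with 2(p − s) > d. Then there exists a constant C such that for every λ' in a lattice 𝓛* ⊂ ℝ^d, Σ_{λ ∈ 𝓛*} (1 + |λ|^{2s}) / (1 + |λ − λ'|^{2p}) ≤ C (1 + |λ'|^{2s}). -/
/-!
Peetre's inequality `1 + |λ|^m ≤ 2^m (1 + |λ - λ'|^m) (1 + |λ'|^m)`, combined with
`(1 + a^m) (1 + a^k) ≤ 2 (1 + a^(m+k))`, bounds the term at `λ` by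
`2^(m+1) (1 + |λ'|^m) / (1 + |λ - λ'|^k)`, where `m = 2s` and `k = 2(p - s)`. Translating by `λ'`
leaves `∑_λ (1 + |λ|^k)⁻¹`, which converges for `k > d` by the `p`-series test on lattices.
-/

open Module

theorem one_add_pow_mul_one_add_pow_le {a : ℝ} (ha : 0 ≤ a) (m k : ℕ) :
    (1 + a ^ m) * (1 + a ^ k) ≤ 2 * (1 + a ^ (m + k)) := by
  have : 0 ≤ (1 - a ^ m) * (1 - a ^ k) := by
    rcases le_total a 1 with h | h
    · exact mul_nonneg (sub_nonneg.2 (pow_le_one₀ ha h)) (sub_nonneg.2 (pow_le_one₀ ha h))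
    · exact mul_nonneg_of_nonpos_of_nonpos (sub_nonpos.2 (one_le_pow₀ h))
        (sub_nonpos.2 (one_le_pow₀ h))
  rw [pow_add]
  linarith

theorem one_add_add_pow_le {a b : ℝ} (ha : 0 ≤ a) (hb : 0 ≤ b) (n : ℕ) :
    1 + (a + b) ^ n ≤ 2 ^ n * ((1 + a ^ n) * (1 + b ^ n)) := by
  have h2 : (2 : ℝ) ^ (n - 1) ≤ 2 ^ n := pow_le_pow_right₀ (by norm_num) (Nat.sub_le n 1)
  have h1 : (1 : ℝ) ≤ 2 ^ n := one_le_pow₀ (by norm_num)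
  have := add_pow_le ha hb n
  nlinarith [pow_nonneg ha n, pow_nonneg hb n, mul_nonneg (pow_nonneg ha n) (pow_nonneg hb n)]

section Peetre

variable {E : Type*} [SeminormedAddCommGroup E]

theorem one_add_norm_add_pow_le (x y : E) (n : ℕ) :
    1 + ‖x + y‖ ^ n ≤ 2 ^ n * ((1 + ‖x‖ ^ n) * (1 + ‖y‖ ^ n)) :=
  calc 1 + ‖x + y‖ ^ n ≤ 1 + (‖x‖ + ‖y‖) ^ n := by gcongr; exact norm_add_le x y
    _ ≤ _ := one_add_add_pow_le (norm_nonneg x) (norm_nonneg y) n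

theorem one_add_norm_pow_div_le (x y : E) (m k : ℕ) :
    (1 + ‖x‖ ^ m) / (1 + ‖x - y‖ ^ (m + k)) ≤
      2 ^ (m + 1) * (1 + ‖y‖ ^ m) * (1 + ‖x - y‖ ^ k)⁻¹ := by
  set a := ‖x - y‖
  have hpeetre : 1 + ‖x‖ ^ m ≤ 2 ^ m * ((1 + a ^ m) * (1 + ‖y‖ ^ m)) := by
    simpa using one_add_norm_add_pow_le (x - y) y m
  have hmix := one_add_pow_mul_one_add_pow_le (norm_nonneg (x - y)) m k
  rw [div_le_iff₀ (by positivity)]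
  calc 1 + ‖x‖ ^ m ≤ 2 ^ m * ((1 + a ^ m) * (1 + ‖y‖ ^ m)) := hpeetre
    _ ≤ 2 ^ m * (2 * (1 + a ^ (m + k)) / (1 + a ^ k) * (1 + ‖y‖ ^ m)) := by
      gcongr
      rwa [le_div_iff₀ (by positivity)]
    _ = _ := by ring

end Peetre

namespace ZLattice

variable {E : Type*} [NormedAddCommGroup E] [NormedSpace ℝ E] [FiniteDimensional ℝ E]
  (L : Submodule ℤ E) [DiscreteTopology L]

theorem summable_one_add_norm_pow_inv {k : ℕ} (hk : finrank ℤ L < k) :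
    Summable fun v : L ↦ (1 + ‖v‖ ^ k)⁻¹ := by
  refine (summable_norm_pow_inv L k hk).of_norm_bounded_eventually ?_
  filter_upwards [(Set.finite_singleton (0 : L)).compl_mem_cofinite] with v hv
  have hv : 0 < ‖v‖ := norm_pos_iff.2 hv
  rw [Real.norm_of_nonneg (by positivity), inv_pow]
  gcongr
  linarith

theorem exists_tsum_one_add_norm_pow_div_le (m : ℕ) {k : ℕ} (hk : finrank ℤ L < k) :
    ∃ C > 0, ∀ μ : L,
      ∑' v : L, (1 + ‖v‖ ^ m) / (1 + ‖v - μ‖ ^ (m + k)) ≤ C * (1 + ‖μ‖ ^ m) := by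
  have hsum := summable_one_add_norm_pow_inv L hk
  refine ⟨2 ^ (m + 1) * ∑' v : L, (1 + ‖v‖ ^ k)⁻¹,
    mul_pos (by positivity) (hsum.tsum_pos (fun _ ↦ by positivity) 0 (by positivity)), fun μ ↦ ?_⟩
  have hsum_μ : Summable fun v : L ↦ 2 ^ (m + 1) * (1 + ‖μ‖ ^ m) * (1 + ‖v - μ‖ ^ k)⁻¹ :=
    ((Equiv.subRight μ).summable_iff.2 hsum).mul_left _
  have hle := fun v : L ↦ one_add_norm_pow_div_le v μ m k
  have hshift : ∑' v : L, (1 + ‖v - μ‖ ^ k)⁻¹ = ∑' v : L, (1 + ‖v‖ ^ k)⁻¹ :=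
    (Equiv.subRight μ).tsum_eq fun v ↦ (1 + ‖v‖ ^ k)⁻¹
  calc ∑' v : L, (1 + ‖v‖ ^ m) / (1 + ‖v - μ‖ ^ (m + k))
      ≤ ∑' v : L, 2 ^ (m + 1) * (1 + ‖μ‖ ^ m) * (1 + ‖v - μ‖ ^ k)⁻¹ :=
        Summable.tsum_le_tsum hle (hsum_μ.of_nonneg_of_le (fun _ ↦ by positivity) hle) hsum_μ
    _ = _ := by
        rw [tsum_mul_left, hshift]
        ring

end ZLattice

theorem exists_tsum_one_add_norm_pow_div_le_of_linearEquiv {E ι : Type*} [NormedAddCommGroup E]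
    [NormedSpace ℝ E] [FiniteDimensional ℝ E] [Fintype ι] (T : (ι → ℝ) ≃ₗ[ℝ] E) (m : ℕ) {k : ℕ}
    (hk : Fintype.card ι < k) :
    ∃ C > 0, ∀ z' : ι → ℤ,
      ∑' z : ι → ℤ, (1 + ‖T (fun i ↦ (z i : ℝ))‖ ^ m) /
          (1 + ‖T (fun i ↦ (z i : ℝ)) - T (fun i ↦ (z' i : ℝ))‖ ^ (m + k)) ≤
        C * (1 + ‖T (fun i ↦ (z' i : ℝ))‖ ^ m) := by
  classical
  set b := (Pi.basisFun ℝ ι).map T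
  set e := (b.restrictScalars ℤ).equivFun.symm
  have he (z : ι → ℤ) : (e z : E) = T (fun i ↦ (z i : ℝ)) := by
    simp only [e, b, Basis.equivFun_symm_apply, AddSubmonoidClass.coe_finsetSum, SetLike.val_smul,
      Basis.restrictScalars_apply, Basis.map_apply, ← map_zsmul, ← map_sum]
    congr 1
    ext j
    simp [Pi.single_apply]
  obtain ⟨C, hC, hbound⟩ := ZLattice.exists_tsum_one_add_norm_pow_div_le _ m
    (k := k) (by rwa [finrank_eq_card_basis (b.restrictScalars ℤ)])
  refine ⟨C, hC, fun z' ↦ ?_⟩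
  have key := hbound (e z')
  rw [← e.toEquiv.tsum_eq] at key
  simpa only [LinearEquiv.coe_toEquiv, Submodule.coe_norm, AddSubgroupClass.coe_sub, ← he]
    using key

theorem lattice_sum_decay_general
    (d : ℕ) (Lstar : Matrix (Fin d) (Fin d) ℝ) (hL : Lstar.det ≠ 0)
    (s p : ℕ) (hd : d < 2 * (p - s)) :
    ∃ C > 0, ∀ z' : Fin d → ℤ,
      (∑' z : Fin d → ℤ,
        (1 + Real.sqrt (∑ i, (Lstar.mulVec (fun j => (z j : ℝ)) i) ^ 2) ^ (2 * s)) /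
          (1 + Real.sqrt (∑ i, ((Lstar.mulVec (fun j => (z j : ℝ)) -
              Lstar.mulVec (fun j => (z' j : ℝ))) i) ^ 2) ^ (2 * p)))
        ≤ C * (1 + Real.sqrt (∑ i, (Lstar.mulVec (fun j => (z' j : ℝ)) i) ^ 2) ^ (2 * s)) := by
  set T : (Fin d → ℝ) ≃ₗ[ℝ] EuclideanSpace ℝ (Fin d) :=
    ((Matrix.toLin' Lstar).equivOfDetNeZero (by rwa [LinearMap.det_toLin'])).trans
      (WithLp.linearEquiv 2 ℝ (Fin d → ℝ)).symm
  have hT (v : Fin d → ℝ) : ‖T v‖ = Real.sqrt (∑ i, (Lstar.mulVec v i) ^ 2) := by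
    simp [T, EuclideanSpace.norm_eq]
  obtain ⟨C, hC, hbound⟩ := exists_tsum_one_add_norm_pow_div_le_of_linearEquiv T (2 * s)
    (k := 2 * (p - s)) (by rwa [Fintype.card_fin])
  refine ⟨C, hC, fun z' ↦ ?_⟩
  rw [show 2 * s + 2 * (p - s) = 2 * p by omega] at hbound
  simpa only [← map_sub, hT, Matrix.mulVec_sub] using hbound z'

/-- Let p > s ≥ 0 be integers with 2(p − s) > d. Then there is a
constant C such that for every λ' in the lattice 𝓛* = {L* z : z ∈ ℤ^d}
(L* invertible), Σ_{λ ∈ 𝓛*} (1 + |λ|^{2s}) / (1 + |λ − λ'|^{2p}) ≤ C (1 + |λ'|^{2s}),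
where |·| is the Euclidean norm. -/
theorem lattice_sum_decay
    (d : ℕ) (Lstar : Matrix (Fin d) (Fin d) ℝ) (hL : Lstar.det ≠ 0)
    (s p : ℕ) (hsp : s < p) (hd : d < 2 * (p - s)) :
    ∃ C > 0, ∀ z' : Fin d → ℤ,
      (∑' z : Fin d → ℤ,
        (1 + Real.sqrt (∑ i, (Lstar.mulVec (fun j => (z j : ℝ)) i) ^ 2) ^ (2 * s)) /
          (1 + Real.sqrt (∑ i, ((Lstar.mulVec (fun j => (z j : ℝ)) -
              Lstar.mulVec (fun j => (z' j : ℝ))) i) ^ 2) ^ (2 * p)))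
        ≤ C * (1 + Real.sqrt (∑ i, (Lstar.mulVec (fun j => (z' j : ℝ)) i) ^ 2) ^ (2 * s)) :=
  lattice_sum_decay_general d Lstar hL s p hd
end
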